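/- arXiv:math/0610321 — 5 statements merged into one kernel-verified Lean document; each statement's English description precedes it below -/
import Mathlib

section
/- For every integer C ≥ 2 and every real λ > 0, if Λ_n := ∑_{i=0}^n λ^i/i!, then Λ_{C-1}^2 - Λ_C·Λ_{C-2} > 0. -/
/-!
The Poisson weights `a i = λ^i / i!` have decreasing ratios `a (i+1) / a i = λ / (i+1)`.
For any positive sequence with decreasing ratios,
`Λ_{C-1}² - Λ_C Λ_{C-2} = a_{C-1} Λ_{C-1} - a_C Λ_{C-2}`; expanding
`a_{C-1} Λ_{C-1} = a_{C-1} a_0 + ∑_{i ≤ C-2} a_{C-1} a_{i+1}` and comparing termwise with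
`a_C a_i ≤ a_{C-1} a_{i+1}` leaves the positive term `a_{C-1} a_0`.
-/

open Finset

section LogConcave

variable {a : ℕ → ℝ}

lemma mul_le_mul_succ_of_antitone_ratio (ha : ∀ i, 0 < a i)
    (hratio : Antitone fun i => a (i + 1) / a i) {i m : ℕ} (him : i ≤ m) :
    a (m + 1) * a i ≤ a m * a (i + 1) := by
  have h := hratio him
  rw [div_le_div_iff₀ (ha m) (ha i)] at h
  linarith

lemma mul_sum_range_lt_of_antitone_ratio (ha : ∀ i, 0 < a i)
    (hratio : Antitone fun i => a (i + 1) / a i) (m : ℕ) :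
    a (m + 1) * ∑ i ∈ range m, a i < a m * ∑ i ∈ range (m + 1), a i := by
  have hterms : ∑ i ∈ range m, a (m + 1) * a i ≤ ∑ i ∈ range m, a m * a (i + 1) :=
    sum_le_sum fun i hi =>
      mul_le_mul_succ_of_antitone_ratio ha hratio (mem_range.mp hi).le
  have hfirst : 0 < a m * a 0 := mul_pos (ha m) (ha 0)
  rw [sum_range_succ', mul_add, mul_sum, mul_sum]
  linarith

theorem sum_range_sq_gt_of_antitone_ratio (ha : ∀ i, 0 < a i)
    (hratio : Antitone fun i => a (i + 1) / a i) (n : ℕ) :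
    (∑ i ∈ range (n + 2), a i) * ∑ i ∈ range n, a i < (∑ i ∈ range (n + 1), a i) ^ 2 := by
  have key := mul_sum_range_lt_of_antitone_ratio ha hratio n
  rw [sum_range_succ _ (n + 1), sum_range_succ _ n] at *
  nlinarith

end LogConcave

lemma poisson_weight_ratio {lam : ℝ} (hlam : 0 < lam) (i : ℕ) :
    lam ^ (i + 1) / (i + 1).factorial / (lam ^ i / i.factorial) = lam / (i + 1) := by
  rw [Nat.factorial_succ]
  push_cast
  field_simp
  ring

lemma antitone_poisson_weight_ratio {lam : ℝ} (hlam : 0 < lam) :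
    Antitone fun i : ℕ => lam ^ (i + 1) / (i + 1).factorial / (lam ^ i / i.factorial) := by
  intro i j hij
  simp only [poisson_weight_ratio hlam]
  gcongr

theorem stmt0 (C : ℕ) (hC : 2 ≤ C) (lam : ℝ) (hlam : 0 < lam)
    (Λ : ℕ → ℝ) (hΛ : ∀ n, Λ n = ∑ i ∈ Finset.range (n + 1), lam ^ i / (Nat.factorial i)) :
    Λ (C - 1) ^ 2 - Λ C * Λ (C - 2) > 0 := by
  obtain ⟨n, rfl⟩ : ∃ n, C = n + 2 := ⟨C - 2, by omega⟩
  have h := sum_range_sq_gt_of_antitone_ratio (a := fun i => lam ^ i / i.factorial)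
    (fun i => by positivity) (antitone_poisson_weight_ratio hlam) (n + 1)
  simp only [hΛ, Nat.add_sub_cancel, show n + 2 - 1 = n + 1 by omega]
  linarith
end

section
/- Let a, b, c > 0 with b^2 > a·c and q ≥ 1 an integer. The map J(ξ) = ξ·((c + ξb)/(b + ξa))^q is strictly increasing on (0,∞), satisfies J(ξ) → 0 as ξ → 0 and J(ξ) → ∞ as ξ → ∞, and is a bijection from (0,∞) onto (0,∞). -/
theorem stmt3 (a b c : ℝ) (ha : 0 < a) (hb : 0 < b) (hc : 0 < c)
    (hbac : b ^ 2 > a * c) (q : ℕ) (hq : 1 ≤ q)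
    (J : ℝ → ℝ) (hJ : ∀ ξ, J ξ = ξ * ((c + ξ * b) / (b + ξ * a)) ^ q) :
    StrictMonoOn J (Set.Ioi 0) ∧
    Filter.Tendsto J (nhdsWithin 0 (Set.Ioi 0)) (nhds 0) ∧
    Filter.Tendsto J Filter.atTop Filter.atTop ∧
    Set.BijOn J (Set.Ioi 0) (Set.Ioi 0) := by
  have hJf : J = fun ξ => ξ * ((c + ξ * b) / (b + ξ * a)) ^ q := funext hJ
  subst hJf
  set f : ℝ → ℝ := fun ξ => (c + ξ * b) / (b + ξ * a) with hfdef
  have hden : ∀ x : ℝ, 0 ≤ x → 0 < b + x * a := fun x hx =>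
    add_pos_of_pos_of_nonneg hb (mul_nonneg hx ha.le)
  have hnum : ∀ x : ℝ, 0 ≤ x → 0 < c + x * b := fun x hx =>
    add_pos_of_pos_of_nonneg hc (mul_nonneg hx hb.le)
  have hfpos : ∀ x : ℝ, 0 ≤ x → 0 < f x := fun x hx =>
    div_pos (hnum x hx) (hden x hx)
  have hflt : ∀ x y : ℝ, 0 ≤ x → x < y → f x < f y := by
    intro x y hx hxy
    have hdx := hden x hx
    have hdy := hden y (hx.trans hxy.le)
    rw [hfdef]
    simp only
    rw [div_lt_div_iff₀ hdx hdy]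
    nlinarith [mul_pos (sub_pos.mpr hxy) (sub_pos.mpr hbac)]
  have hmono : StrictMonoOn (fun ξ => ξ * f ξ ^ q) (Set.Ioi 0) := by
    intro x hx y hy hxy
    simp only [Set.mem_Ioi] at hx hy
    exact mul_lt_mul hxy (pow_le_pow_left₀ (hfpos x hx.le).le (hflt x y hx.le hxy).le q)
      (pow_pos (hfpos x hx.le) q) hy.le
  have h0 : Filter.Tendsto (fun ξ => ξ * f ξ ^ q) (nhdsWithin 0 (Set.Ioi 0)) (nhds 0) := by
    have hc0 : ContinuousAt (fun ξ : ℝ => ξ * f ξ ^ q) 0 := by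
      apply ContinuousAt.mul continuousAt_id
      apply ContinuousAt.pow
      exact ContinuousAt.div
        ((continuous_const.add (continuous_id.mul continuous_const)).continuousAt)
        ((continuous_const.add (continuous_id.mul continuous_const)).continuousAt)
        (by simpa using hb.ne')
    have := hc0.continuousWithinAt (s := Set.Ioi 0)
    simpa [ContinuousWithinAt] using this
  have htop : Filter.Tendsto (fun ξ => ξ * f ξ ^ q) Filter.atTop Filter.atTop := by
    have hK : 0 < f 1 ^ q := pow_pos (hfpos 1 zero_le_one) q
    refine Filter.tendsto_atTop_mono' Filter.atTop ?_
      (Filter.Tendsto.atTop_mul_const hK Filter.tendsto_id)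
    filter_upwards [Filter.eventually_ge_atTop (1 : ℝ)] with ξ hξ
    have hle : f 1 ≤ f ξ := by
      rcases eq_or_lt_of_le hξ with h | h
      · rw [h]
      · exact (hflt 1 ξ zero_le_one h).le
    exact mul_le_mul_of_nonneg_left
      (pow_le_pow_left₀ (hfpos 1 zero_le_one).le hle q) (by simp only [id_eq]; linarith)
  refine ⟨hmono, h0, htop, ?_, hmono.injOn, ?_⟩
  · intro x hx
    simp only [Set.mem_Ioi] at hx
    exact mul_pos hx (pow_pos (hfpos x hx.le) q)
  · intro y hy
    simp only [Set.mem_Ioi] at hy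
    obtain ⟨x₁, hx₁lt, hx₁mem⟩ :=
      ((h0.eventually (gt_mem_nhds hy)).and self_mem_nhdsWithin).exists
    replace hx₁mem : (0:ℝ) < x₁ := hx₁mem
    obtain ⟨x₂, hx₂ge, hx₁₂⟩ :=
      ((htop.eventually_ge_atTop y).and (Filter.eventually_ge_atTop x₁)).exists
    have hcont : ContinuousOn (fun ξ => ξ * f ξ ^ q) (Set.Icc x₁ x₂) := by
      apply ContinuousOn.mul continuousOn_id
      apply ContinuousOn.pow
      apply ContinuousOn.div
      · exact (continuous_const.add (continuous_id.mul continuous_const)).continuousOn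
      · exact (continuous_const.add (continuous_id.mul continuous_const)).continuousOn
      · intro x hx
        exact (hden x (le_trans hx₁mem.le hx.1)).ne'
    have hsub := intermediate_value_Icc hx₁₂ hcont
    have hymem : y ∈ Set.Icc ((fun ξ => ξ * f ξ ^ q) x₁) ((fun ξ => ξ * f ξ ^ q) x₂) :=
      ⟨hx₁lt.le, hx₂ge⟩
    obtain ⟨x, hxmem, hxeq⟩ := hsub hymem
    exact ⟨x, lt_of_lt_of_le hx₁mem hxmem.1, hxeq⟩
end

section
/- Let F: I → I be a continuous, monotone decreasing map on a bounded closed interval I = [l, r] with a unique fixed point x*. Then the iterates F^n(x) converge to x* for every x ∈ I if and only if F^n(l) converges to x*. -/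
/-!
Every orbit of an antitone self-map `F` of `[l, r]` is trapped by the orbit of `l`: by induction,
`F^[n+1] y` lies between `F^[n] l` and `F^[n+1] l`, the base case `l ≤ F y ≤ F l` holding because
`l` is the least point and `F` reverses order. So if the orbit of `l` converges to `x*`, every orbit
is squeezed to `x*`.
-/

open Set Filter Topology

section

variable {α : Type*} [LinearOrder α] {s : Set α} {F : α → α} {l : α}

theorem AntitoneOn.iterate_succ_mem_uIcc_of_isLeast (hF : AntitoneOn F s) (hmaps : MapsTo F s s)
    (hs : s.OrdConnected) (hl : IsLeast s l) {y : α} (hy : y ∈ s) (n : ℕ) :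
    F^[n + 1] y ∈ uIcc (F^[n] l) (F^[n + 1] l) := by
  induction n with
  | zero => exact Icc_subset_uIcc ⟨hl.2 (hmaps hy), hF hl.1 hy (hl.2 hy)⟩
  | succ n ih =>
    have hmem : ∀ m, F^[m] l ∈ s := fun m => hmaps.iterate m hl.1
    have hstep := (hF.mono (hs.uIcc_subset (hmem n) (hmem (n + 1)))).mapsTo_uIcc ih
    simpa only [Function.iterate_succ_apply'] using hstep

theorem AntitoneOn.tendsto_iterate_of_tendsto_iterate_isLeast [TopologicalSpace α]
    [OrderTopology α] (hF : AntitoneOn F s) (hmaps : MapsTo F s s) (hs : s.OrdConnected)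
    (hl : IsLeast s l) {x : α} (hlim : Tendsto (fun n => F^[n] l) atTop (𝓝 x)) {y : α}
    (hy : y ∈ s) : Tendsto (fun n => F^[n] y) atTop (𝓝 x) := by
  have hlim' : Tendsto (fun n => F^[n + 1] l) atTop (𝓝 x) := (tendsto_add_atTop_iff_nat 1).2 hlim
  refine (tendsto_add_atTop_iff_nat 1).1 ((hlim.uIcc hlim').of_smallSets ?_)
  exact Eventually.of_forall (hF.iterate_succ_mem_uIcc_of_isLeast hmaps hs hl hy)

end

theorem stmt9_general (l r : ℝ) (hlr : l ≤ r) (F : ℝ → ℝ)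
    (hmaps : Set.MapsTo F (Set.Icc l r) (Set.Icc l r))
    (hanti : AntitoneOn F (Set.Icc l r))
    (xs : ℝ) :
    (∀ x ∈ Set.Icc l r, Filter.Tendsto (fun n => F^[n] x) Filter.atTop (nhds xs)) ↔
      Filter.Tendsto (fun n => F^[n] l) Filter.atTop (nhds xs) :=
  ⟨fun h => h l (left_mem_Icc.2 hlr), fun h _ hx =>
    hanti.tendsto_iterate_of_tendsto_iterate_isLeast hmaps ordConnected_Icc (isLeast_Icc hlr) h hx⟩

theorem stmt9 (l r : ℝ) (hlr : l ≤ r) (F : ℝ → ℝ)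
    (hcont : ContinuousOn F (Set.Icc l r))
    (hmaps : Set.MapsTo F (Set.Icc l r) (Set.Icc l r))
    (hanti : AntitoneOn F (Set.Icc l r))
    (xs : ℝ) (hxs : xs ∈ Set.Icc l r) (hfix : F xs = xs)
    (huniq : ∀ y ∈ Set.Icc l r, F y = y → y = xs) :
    (∀ x ∈ Set.Icc l r, Filter.Tendsto (fun n => F^[n] x) Filter.atTop (nhds xs)) ↔
      Filter.Tendsto (fun n => F^[n] l) Filter.atTop (nhds xs) :=
  stmt9_general l r hlr F hmaps hanti xs
end

section
/- Let a, b, c, ν > 0 with b^2 > a·c, q ≥ 2 an integer, and Φ(ξ) = ν·((b + ξa)/(c + ξb))^q. Then Φ has negative Schwarzian derivative on [0,∞): for all ξ ≥ 0, Φ'''(ξ)/Φ'(ξ) − (3/2)(Φ''(ξ)/Φ'(ξ))^2 < 0. -/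
/-! With `U = b + ξ a` and `V = c + ξ b` one has `Φ' = ν q (a c - b²) U ^ (q - 1) V ^ (-q - 1)`,
whose logarithmic derivative is `L = (q - 1) α - (q + 1) β` for `α = a / U`, `β = b / V`.
Since `α' = -α²` and `β' = -β²`, the Schwarzian `L' - L² / 2` of `Φ` equals
`-(q² - 1) (α - β)² / 2`, and `α - β = (a c - b²) / (U V) ≠ 0`. -/

open Filter Topology

theorem schwarzian_eq_of_hasDerivAt_logDeriv {𝕜 : Type*} [NontriviallyNormedField 𝕜] [CharZero 𝕜]
    {f g L : 𝕜 → 𝕜} {L' x : 𝕜}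
    (hf : ∀ᶠ y in 𝓝 x, HasDerivAt f (g y) y) (hg : ∀ᶠ y in 𝓝 x, HasDerivAt g (g y * L y) y)
    (hL : HasDerivAt L L' x) (hgx : g x ≠ 0) :
    iteratedDeriv 3 f x / deriv f x - 3 / 2 * (iteratedDeriv 2 f x / deriv f x) ^ 2
      = L' - L x ^ 2 / 2 := by
  have hd2 : iteratedDeriv 2 f =ᶠ[𝓝 x] fun y => g y * L y := by
    filter_upwards [hf.eventually_nhds, hg] with y hfy hgy
    rw [iteratedDeriv_succ, iteratedDeriv_one,
      EventuallyEq.deriv_eq (hfy.mono fun z hz => hz.deriv), hgy.deriv]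
  have hd3 : iteratedDeriv 3 f x = g x * L x * L x + g x * L' := by
    rw [iteratedDeriv_succ, hd2.deriv_eq]
    exact (hg.self_of_nhds.mul hL).deriv
  rw [hd3, hd2.self_of_nhds, hf.self_of_nhds.deriv]
  field_simp
  ring

section Affine

variable {p r s t x : ℝ}

theorem hasDerivAt_affine : HasDerivAt (fun x => p + x * r) r x := by
  simpa using ((hasDerivAt_id x).mul_const r).const_add p

theorem hasDerivAt_div_affine (hU : p + x * r ≠ 0) :
    HasDerivAt (fun x => r / (p + x * r)) (-(r / (p + x * r)) ^ 2) x := by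
  refine ((hasDerivAt_const x r).div hasDerivAt_affine hU).congr_deriv ?_
  field_simp
  ring

theorem hasDerivAt_affine_zpow_mul_affine_zpow (m k : ℤ) (hU : p + x * r ≠ 0)
    (hV : s + x * t ≠ 0) :
    HasDerivAt (fun x => (p + x * r) ^ m * (s + x * t) ^ k)
      ((p + x * r) ^ m * (s + x * t) ^ k * (m * (r / (p + x * r)) + k * (t / (s + x * t)))) x := by
  refine (((hasDerivAt_zpow m _ (.inl hU)).comp x hasDerivAt_affine).mul
    ((hasDerivAt_zpow k _ (.inl hV)).comp x hasDerivAt_affine)).congr_deriv ?_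
  simp only [Function.comp_def, zpow_sub_one₀ hU, zpow_sub_one₀ hV]
  field_simp

theorem hasDerivAt_div_affine_pow (q : ℕ) (hU : p + x * r ≠ 0) (hV : s + x * t ≠ 0) :
    HasDerivAt (fun x => ((p + x * r) / (s + x * t)) ^ q)
      (q * (r * s - p * t) * ((p + x * r) ^ ((q : ℤ) - 1) * (s + x * t) ^ (-(q : ℤ) - 1))) x := by
  have hzpow : (fun x => ((p + x * r) / (s + x * t)) ^ q)
      = fun x => (p + x * r) ^ (q : ℤ) * (s + x * t) ^ (-(q : ℤ)) := by
    funext x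
    rw [zpow_neg, zpow_natCast, zpow_natCast, div_pow, div_eq_mul_inv]
  rw [hzpow]
  refine (hasDerivAt_affine_zpow_mul_affine_zpow _ _ hU hV).congr_deriv ?_
  rw [zpow_sub_one₀ hU, zpow_sub_one₀ hV,
    show r * s - p * t = r * (s + x * t) - t * (p + x * r) by ring]
  generalize p + x * r = U at hU ⊢
  generalize s + x * t = V at hV ⊢
  push_cast
  field_simp
  ring

end Affine

theorem schwarzian_form_neg {q α β : ℝ} (hq : 1 < q) (hαβ : α ≠ β) :
    -((q - 1) * α ^ 2) + (q + 1) * β ^ 2 - ((q - 1) * α - (q + 1) * β) ^ 2 / 2 < 0 := by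
  have hsq : 0 < (α - β) ^ 2 := sq_pos_of_ne_zero (sub_ne_zero.mpr hαβ)
  nlinarith [mul_pos (by nlinarith : 0 < q ^ 2 - 1) hsq]

theorem stmt10 (a b c ν : ℝ) (ha : 0 < a) (hb : 0 < b) (hc : 0 < c) (hν : 0 < ν)
    (hbac : b ^ 2 > a * c) (q : ℕ) (hq : 2 ≤ q)
    (Φ : ℝ → ℝ) (hΦ : ∀ ξ, Φ ξ = ν * ((b + ξ * a) / (c + ξ * b)) ^ q) :
    ∀ ξ : ℝ, 0 ≤ ξ →
      iteratedDeriv 3 Φ ξ / deriv Φ ξ - (3 / 2) * (iteratedDeriv 2 Φ ξ / deriv Φ ξ) ^ 2 < 0 := by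
  intro ξ hξ
  have hpos : ∀ᶠ x in 𝓝 ξ, 0 < b + x * a ∧ 0 < c + x * b :=
    (continuousAt_const.eventually_lt (by fun_prop) (by positivity)).and
      (continuousAt_const.eventually_lt (by fun_prop) (by positivity))
  obtain ⟨hU, hV⟩ := hpos.self_of_nhds
  set g : ℝ → ℝ := fun x =>
    ν * (q * (a * c - b * b) * ((b + x * a) ^ ((q : ℤ) - 1) * (c + x * b) ^ (-(q : ℤ) - 1)))
  set L : ℝ → ℝ := fun x => (q - 1) * (a / (b + x * a)) - (q + 1) * (b / (c + x * b))
  have hΦ' : ∀ᶠ x in 𝓝 ξ, HasDerivAt Φ (g x) x := by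
    filter_upwards [hpos] with x ⟨hUx, hVx⟩
    rw [funext hΦ]
    exact (hasDerivAt_div_affine_pow q hUx.ne' hVx.ne').const_mul ν
  have hg' : ∀ᶠ x in 𝓝 ξ, HasDerivAt g (g x * L x) x := by
    filter_upwards [hpos] with x ⟨hUx, hVx⟩
    refine (((hasDerivAt_affine_zpow_mul_affine_zpow _ _ hUx.ne' hVx.ne').const_mul _).const_mul
      ν).congr_deriv ?_
    simp only [g, L]
    push_cast
    ring
  have hL' : HasDerivAt L (-((q - 1) * (a / (b + ξ * a)) ^ 2) + (q + 1) * (b / (c + ξ * b)) ^ 2) ξ :=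
    (((hasDerivAt_div_affine hU.ne').const_mul _).sub
      ((hasDerivAt_div_affine hV.ne').const_mul _)).congr_deriv (by ring)
  have hgξ : g ξ ≠ 0 := by
    have : a * c - b * b ≠ 0 := by nlinarith
    have : (q : ℝ) ≠ 0 := by positivity
    positivity
  rw [schwarzian_eq_of_hasDerivAt_logDeriv hΦ' hg' hL' hgξ]
  refine schwarzian_form_neg (by exact_mod_cast hq) fun hαβ => ?_
  rw [div_eq_div_iff hU.ne' hV.ne'] at hαβ
  nlinarith
end

section
/- Fix an integer C ≥ 2 and define G(j) = (4C/j)·∑_{m=1}^{j} T(j,m) − 2 where T(j,m) = (C−1)!·(C−j)! / ((C−m)!·(C−j−1+m)!). Then G(j+1) ≥ G(j) for all 1 ≤ j ≤ C−2. -/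
/-!
Write `T j m` for the summand and `S j = ∑_{m=1}^{j} T j m`; the claim is `S j / j ≤ S (j+1) / (j+1)`.
The summand is symmetric, `T j m = T j (j+1-m)`, and `(C-j) T (j+1) m = (C-j-1+m) T j m`.
Summing the latter, and evaluating `∑ (m-1) T j m = (j-1) S j / 2` by the symmetry, gives
`(C-j) S (j+1) = (C-j + (j-1)/2) S j + (C-j)`, which reduces the claim to
`S j (2(C-j) - j(j-1)) ≤ 2j(C-j)`. This holds termwise because
`T j m ((C-j) - (m-1)(j-m)) ≤ C-j`, proved by induction on `m` up to the middle of the range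
along `(C-j+m) T j (m+1) = (C-m) T j m`, and then extended to all `m` by the symmetry.
-/

open Finset
open scoped Nat

noncomputable def factorialRatio (C j m : ℕ) : ℝ :=
  (C - 1)! * (C - j)! / ((C - m)! * (C - j - 1 + m)!)

noncomputable def factorialRatioSum (C j : ℕ) : ℝ :=
  ∑ m ∈ Icc 1 j, factorialRatio C j m

section
variable {C j m : ℕ}

lemma factorialRatio_pos : 0 < factorialRatio C j m := by
  unfold factorialRatio; positivity

lemma factorialRatio_one (hj : j < C) : factorialRatio C j 1 = 1 := by
  rw [factorialRatio, show C - j - 1 + 1 = C - j by omega, mul_comm]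
  exact div_self (by positivity)

lemma factorialRatio_self (hj : j < C) : factorialRatio C j j = 1 := by
  rw [factorialRatio, show C - j - 1 + j = C - 1 by omega, mul_comm]
  exact div_self (by positivity)

lemma factorialRatio_reflect (hj : j < C) (hm : m ≤ j + 1) :
    factorialRatio C j (j + 1 - m) = factorialRatio C j m := by
  rw [factorialRatio, factorialRatio, show C - (j + 1 - m) = C - j - 1 + m by omega,
    show C - j - 1 + (j + 1 - m) = C - m by omega, mul_comm ((C - m)! : ℝ)]

lemma factorialRatio_succ_right (hm : m < C) (hj : j < C) :
    factorialRatio C j (m + 1) * (C - j + m) = factorialRatio C j m * (C - m) := by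
  have hm' : (C - m : ℝ) ≠ 0 := sub_ne_zero.2 (by exact_mod_cast hm.ne')
  have hj' : (C - j + m : ℝ) ≠ 0 := by
    have : (j : ℝ) < C := by exact_mod_cast hj
    positivity
  unfold factorialRatio
  rw [show C - j - 1 + (m + 1) = C - j + m by omega,
    ← Nat.mul_factorial_pred (n := C - j + m) (by omega),
    ← Nat.mul_factorial_pred (n := C - m) (by omega),
    show C - j + m - 1 = C - j - 1 + m by omega, show C - m - 1 = C - (m + 1) by omega]
  push_cast [Nat.cast_sub hj.le, Nat.cast_sub hm.le]
  field_simp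

lemma factorialRatio_succ_left (hm : 1 ≤ m) (hj : j + 2 ≤ C) :
    factorialRatio C (j + 1) m * (C - j) = factorialRatio C j m * (C - j - 1 + m) := by
  have hj' : (C - j : ℝ) ≠ 0 := sub_ne_zero.2 (by exact_mod_cast (by omega : j ≠ C).symm)
  have hm' : (C - (j + 1) + m : ℝ) ≠ 0 := by
    have : (j : ℝ) + 2 ≤ C := by exact_mod_cast hj
    have : (1 : ℝ) ≤ m := by exact_mod_cast hm
    intro h; linarith
  unfold factorialRatio
  rw [← Nat.mul_factorial_pred (n := C - j) (by omega),
    ← Nat.mul_factorial_pred (n := C - j - 1 + m) (by omega),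
    show C - j - 1 + m - 1 = C - (j + 1) - 1 + m by omega, show C - j - 1 = C - (j + 1) by omega]
  push_cast [Nat.cast_sub (by omega : j + 1 ≤ C), Nat.cast_sub (by omega : j ≤ C)]
  field_simp
  ring

lemma factorialRatio_mul_le_of_two_mul_le (hj : j < C) (hm : 1 ≤ m) (hmj : m ≤ j)
    (hmid : 2 * m ≤ j + 2) :
    factorialRatio C j m * ((C - j) - (m - 1) * (j - m)) ≤ C - j := by
  induction m with
  | zero => omega
  | succ m ih =>
    rcases Nat.eq_zero_or_pos m with rfl | hm
    · simp [factorialRatio_one hj]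
    have hjC : (j : ℝ) < C := by exact_mod_cast hj
    have hmj' : (m : ℝ) + 1 ≤ j := by exact_mod_cast hmj
    have hmid' : 2 * (m : ℝ) ≤ j := by exact_mod_cast (by omega : 2 * m ≤ j)
    have hpos : (0 : ℝ) < C - j + m := by positivity
    -- `(C - j + m) f m - (C - m) f (m + 1) = (j - 2m) m (j - m)` for `f k = C - j - (k - 1) (j - k)`
    have step : ((C : ℝ) - m) * ((C - j) - m * (j - (m + 1))) ≤
        (C - j + m) * ((C - j) - (m - 1) * (j - m)) := by
      have : 0 ≤ ((j : ℝ) - 2 * m) * (m * (j - m)) := by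
        apply mul_nonneg (by linarith); apply mul_nonneg (by positivity); linarith
      linarith
    have ih := ih hm (by omega) (by omega)
    have hTpos := factorialRatio_pos (C := C) (j := j) (m := m)
    refine le_of_mul_le_mul_left ?_ hpos
    calc (C - j + m : ℝ) * (factorialRatio C j (m + 1) * ((C - j) - (↑(m + 1) - 1) * (j - ↑(m + 1))))
        = factorialRatio C j m * (((C : ℝ) - m) * ((C - j) - m * (j - (m + 1)))) := by
          rw [← mul_assoc, mul_comm _ (factorialRatio _ _ _), factorialRatio_succ_right (by omega) hj]
          push_cast; ring
      _ ≤ factorialRatio C j m * ((C - j + m) * ((C - j) - (m - 1) * (j - m))) := by gcongr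
      _ ≤ (C - j + m) * (C - j) := by
        rw [mul_left_comm]; exact mul_le_mul_of_nonneg_left ih hpos.le

lemma factorialRatio_mul_le (hj : j < C) (hm : 1 ≤ m) (hmj : m ≤ j) :
    factorialRatio C j m * ((C - j) - (m - 1) * (j - m)) ≤ C - j := by
  by_cases hmid : 2 * m ≤ j + 2
  · exact factorialRatio_mul_le_of_two_mul_le hj hm hmj hmid
  · have h := factorialRatio_mul_le_of_two_mul_le (m := j + 1 - m) hj (by omega) (by omega)
      (by omega)
    rw [factorialRatio_reflect hj (by omega), Nat.cast_sub (by omega)] at h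
    push_cast at h
    linarith

lemma factorialRatioSum_mul_le (hj : j < C) :
    factorialRatioSum C j * (2 * (C - j) - j * (j - 1)) ≤ j * (2 * (C - j)) := by
  have hterm : ∀ m ∈ Icc 1 j,
      factorialRatio C j m * (2 * (C - j) - j * (j - 1)) ≤ 2 * ((C : ℝ) - j) := by
    intro m hm
    obtain ⟨hm, hmj⟩ := mem_Icc.1 hm
    have h := factorialRatio_mul_le hj hm hmj
    have hm' : (1 : ℝ) ≤ m := by exact_mod_cast hm
    have hmj' : (m : ℝ) ≤ j := by exact_mod_cast hmj
    have : 2 * ((m - 1) * (j - m)) ≤ (j : ℝ) * (j - 1) := by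
      nlinarith [sq_nonneg ((m - 1 : ℝ) - (j - m))]
    nlinarith [factorialRatio_pos (C := C) (j := j) (m := m)]
  calc factorialRatioSum C j * (2 * (C - j) - j * (j - 1))
      ≤ ∑ _m ∈ Icc 1 j, 2 * ((C : ℝ) - j) := by
        rw [factorialRatioSum, sum_mul]
        exact sum_le_sum hterm
    _ = j * (2 * (C - j)) := by simp

lemma two_mul_sum_sub_one_mul_factorialRatio (hj : j < C) :
    2 * ∑ m ∈ Icc 1 j, (m - 1 : ℝ) * factorialRatio C j m = (j - 1) * factorialRatioSum C j := by
  have hreflect : ∑ m ∈ Icc 1 j, (m - 1 : ℝ) * factorialRatio C j m =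
      ∑ m ∈ Icc 1 j, (j - m : ℝ) * factorialRatio C j m := by
    refine sum_nbij' (fun m => j + 1 - m) (fun m => j + 1 - m) ?_ ?_ ?_ ?_ ?_ <;>
      intro m hm <;> rw [mem_Icc] at hm
    · exact mem_Icc.2 (by omega)
    · exact mem_Icc.2 (by omega)
    · omega
    · omega
    · rw [factorialRatio_reflect hj (by omega), Nat.cast_sub (by omega)]
      push_cast; ring
  rw [two_mul]
  nth_rewrite 2 [hreflect]
  rw [← sum_add_distrib, factorialRatioSum, mul_sum]
  exact sum_congr rfl fun m _ => by ring

lemma factorialRatioSum_succ (hj : j + 2 ≤ C) :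
    (C - j) * factorialRatioSum C (j + 1) =
      (C - j + (j - 1) / 2) * factorialRatioSum C j + (C - j) := by
  have hsymm := two_mul_sum_sub_one_mul_factorialRatio (C := C) (j := j) (by omega)
  have hterm : ∀ m ∈ Icc 1 j, (C - j : ℝ) * factorialRatio C (j + 1) m =
      (C - j) * factorialRatio C j m + (m - 1) * factorialRatio C j m := by
    intro m hm
    rw [mul_comm, factorialRatio_succ_left (mem_Icc.1 hm).1 hj]
    ring
  rw [factorialRatioSum, sum_Icc_succ_top (by omega), factorialRatio_self (by omega), mul_add,
    mul_sum, sum_congr rfl hterm, sum_add_distrib, ← mul_sum, ← factorialRatioSum]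
  linarith

lemma factorialRatioSum_div_le (hj : 1 ≤ j) (hjC : j + 2 ≤ C) :
    factorialRatioSum C j / j ≤ factorialRatioSum C (j + 1) / (j + 1) := by
  have hD : (0 : ℝ) < C - j := by
    have : (j : ℝ) + 2 ≤ C := by exact_mod_cast hjC
    linarith
  have hj' : (0 : ℝ) < j := by exact_mod_cast hj
  have hsucc := factorialRatioSum_succ hjC
  have hle := factorialRatioSum_mul_le (C := C) (j := j) (by omega)
  rw [div_le_div_iff₀ hj' (by positivity)]
  refine le_of_mul_le_mul_left ?_ hD
  nlinarith

end

theorem stmt17_general (C : ℕ)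
    (T : ℕ → ℕ → ℝ)
    (hT : ∀ j m, T j m = ((Nat.factorial (C - 1)) * (Nat.factorial (C - j))) /
      ((Nat.factorial (C - m)) * (Nat.factorial (C - j - 1 + m))))
    (G : ℕ → ℝ)
    (hG : ∀ j, G j = (4 * (C : ℝ) / (j : ℝ)) * (∑ m ∈ Finset.Icc 1 j, T j m) - 2) :
    ∀ j : ℕ, 1 ≤ j → j ≤ C - 2 → G (j + 1) ≥ G j := by
  obtain rfl : T = factorialRatio C := funext₂ hT
  intro j hj hjC
  have h := factorialRatioSum_div_le (C := C) hj (by omega)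
  rw [ge_iff_le, hG, hG, ← factorialRatioSum, ← factorialRatioSum, mul_comm_div, mul_comm_div]
  push_cast
  gcongr

theorem stmt17 (C : ℕ) (hC : 2 ≤ C)
    (T : ℕ → ℕ → ℝ)
    (hT : ∀ j m, T j m = ((Nat.factorial (C - 1)) * (Nat.factorial (C - j))) /
      ((Nat.factorial (C - m)) * (Nat.factorial (C - j - 1 + m))))
    (G : ℕ → ℝ)
    (hG : ∀ j, G j = (4 * (C : ℝ) / (j : ℝ)) * (∑ m ∈ Finset.Icc 1 j, T j m) - 2) :
    ∀ j : ℕ, 1 ≤ j → j ≤ C - 2 → G (j + 1) ≥ G j :=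
  stmt17_general C T hT G hG
end
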